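/- arXiv:2002.08576 — 4 statements merged into one kernel-verified Lean document; each statement's English description precedes it below -/
import Mathlib

section
/- There exists at least one tangent plane and at least one secant plane in PG(3,q). -/
open Submodule Set

/-- The points of `PG(3,q)`: the 1-dimensional subspaces of a 4-dimensional
vector space over the field `K` of order `q`. -/
def pgPoint (K : Type) [Field K] : Set (Submodule K (Fin 4 → K)) :=
  {W | Module.finrank K ↥W = 1}

/-- The lines of `PG(3,q)`: the 2-dimensional subspaces. -/
def pgLine (K : Type) [Field K] : Set (Submodule K (Fin 4 → K)) :=
  {W | Module.finrank K ↥W = 2}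

/-- The planes of `PG(3,q)`: the 3-dimensional subspaces. -/
def pgPlane (K : Type) [Field K] : Set (Submodule K (Fin 4 → K)) :=
  {W | Module.finrank K ↥W = 3}

/-- The lines of the family `S` passing through the point `p`. -/
def linesThru (K : Type) [Field K] (S : Set (Submodule K (Fin 4 → K)))
    (p : Submodule K (Fin 4 → K)) : Set (Submodule K (Fin 4 → K)) :=
  {l | l ∈ S ∧ p ≤ l}

/-- The lines of the family `S` contained in the plane `π` (the set `S_π`). -/
def linesIn (K : Type) [Field K] (S : Set (Submodule K (Fin 4 → K)))
    (π : Submodule K (Fin 4 → K)) : Set (Submodule K (Fin 4 → K)) :=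
  {l | l ∈ S ∧ l ≤ π}

/-- The lines of `S_π` belonging to the pencil of lines of the plane `π`
through the point `p`. -/
def pencilS (K : Type) [Field K] (S : Set (Submodule K (Fin 4 → K)))
    (p π : Submodule K (Fin 4 → K)) : Set (Submodule K (Fin 4 → K)) :=
  {l | l ∈ S ∧ p ≤ l ∧ l ≤ π}

/-- Property (P1): every point lies on exactly `q(q+1)/2` or exactly `q^2`
lines of `S`, and both numbers are attained. -/
def P1 (K : Type) [Field K] (S : Set (Submodule K (Fin 4 → K))) (q : ℕ) : Prop :=
  (∀ p ∈ pgPoint K, (linesThru K S p).ncard = q * (q + 1) / 2 ∨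
      (linesThru K S p).ncard = q ^ 2) ∧
  (∃ p ∈ pgPoint K, (linesThru K S p).ncard = q * (q + 1) / 2) ∧
  (∃ p ∈ pgPoint K, (linesThru K S p).ncard = q ^ 2)

/-- Property (P2): every plane contains exactly `q(q+1)/2` or exactly `q^2`
lines of `S`. -/
def P2 (K : Type) [Field K] (S : Set (Submodule K (Fin 4 → K))) (q : ℕ) : Prop :=
  ∀ π ∈ pgPlane K, (linesIn K S π).ncard = q * (q + 1) / 2 ∨
    (linesIn K S π).ncard = q ^ 2

/-- Property (P2a): if a plane contains `q^2` lines of `S`, then every pencil of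
lines in that plane contains `0` or `q` lines of `S`. -/
def P2a (K : Type) [Field K] (S : Set (Submodule K (Fin 4 → K))) (q : ℕ) : Prop :=
  ∀ π ∈ pgPlane K, (linesIn K S π).ncard = q ^ 2 →
    ∀ p ∈ pgPoint K, p ≤ π →
      (pencilS K S p π).ncard = 0 ∨ (pencilS K S p π).ncard = q

/-- Property (P2b): if a plane contains `q(q+1)/2` lines of `S`, then every
pencil of lines in that plane contains `(q-1)/2`, `(q+1)/2` or `q` lines of `S`. -/
def P2b (K : Type) [Field K] (S : Set (Submodule K (Fin 4 → K))) (q : ℕ) : Prop :=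
  ∀ π ∈ pgPlane K, (linesIn K S π).ncard = q * (q + 1) / 2 →
    ∀ p ∈ pgPoint K, p ≤ π →
      (pencilS K S p π).ncard = (q - 1) / 2 ∨
      (pencilS K S p π).ncard = (q + 1) / 2 ∨
      (pencilS K S p π).ncard = q

/-- A point is black if it lies on exactly `q^2` lines of `S`. -/
def IsBlack (K : Type) [Field K] (S : Set (Submodule K (Fin 4 → K))) (q : ℕ)
    (p : Submodule K (Fin 4 → K)) : Prop :=
  p ∈ pgPoint K ∧ (linesThru K S p).ncard = q ^ 2

/-- A plane is tangent if it contains exactly `q^2` lines of `S`. -/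
def IsTangent (K : Type) [Field K] (S : Set (Submodule K (Fin 4 → K))) (q : ℕ)
    (π : Submodule K (Fin 4 → K)) : Prop :=
  π ∈ pgPlane K ∧ (linesIn K S π).ncard = q ^ 2

/-- A plane is secant if it contains exactly `q(q+1)/2` lines of `S`. -/
def IsSecant (K : Type) [Field K] (S : Set (Submodule K (Fin 4 → K))) (q : ℕ)
    (π : Submodule K (Fin 4 → K)) : Prop :=
  π ∈ pgPlane K ∧ (linesIn K S π).ncard = q * (q + 1) / 2

/-- For a secant plane `π`, the set `α(π)` of points of `π` lying on exactly
`(q-1)/2` lines of `S_π`. -/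
def alphaSet (K : Type) [Field K] (S : Set (Submodule K (Fin 4 → K))) (q : ℕ)
    (π : Submodule K (Fin 4 → K)) : Set (Submodule K (Fin 4 → K)) :=
  {p | p ∈ pgPoint K ∧ p ≤ π ∧ (pencilS K S p π).ncard = (q - 1) / 2}

/-- For a secant plane `π`, the set `β(π)` of points of `π` lying on exactly
`(q+1)/2` lines of `S_π`. -/
def betaSet (K : Type) [Field K] (S : Set (Submodule K (Fin 4 → K))) (q : ℕ)
    (π : Submodule K (Fin 4 → K)) : Set (Submodule K (Fin 4 → K)) :=
  {p | p ∈ pgPoint K ∧ p ≤ π ∧ (pencilS K S p π).ncard = (q + 1) / 2}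

/-- For a secant plane `π`, the set `γ(π)` of points of `π` lying on exactly
`q` lines of `S_π`. -/
def gammaSet (K : Type) [Field K] (S : Set (Submodule K (Fin 4 → K))) (q : ℕ)
    (π : Submodule K (Fin 4 → K)) : Set (Submodule K (Fin 4 → K)) :=
  {p | p ∈ pgPoint K ∧ p ≤ π ∧ (pencilS K S p π).ncard = q}

/-!
Double count the incidences between the lines of `S` and the points, resp. the planes, of
`PG(3,q)`: a line lies on `|K| + 1` points and, by duality, in `|K| + 1` planes, so both counts
equal `(|K| + 1) |S|`. By (P1) and (P2) the number of lines of `S` through a point, resp. in a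
plane, takes only the values `q(q+1)/2` and `q^2`, and there are as many planes as points; hence
each of the two values is attained by as many planes as points, and (P1) says that both values
are attained by points.
-/

open Module

section DoubleCounting

theorem Set.ncard_setOf_mem_and_eq_card_filter {γ : Type*} {s : Set γ} (hs : s.Finite)
    (t : γ → Prop) [DecidablePred t] : {x | x ∈ s ∧ t x}.ncard = (hs.toFinset.filter t).card := by
  rw [← Set.ncard_coe_finset]; congr 1; ext; simp

theorem sum_ncard_incident_eq_ncard_mul {α β : Type*} [Finite α] (P : Set α) {L : Set β}
    (hL : L.Finite) (r : α → β → Prop) {c : ℕ} (hc : ∀ l ∈ L, {p | p ∈ P ∧ r p l}.ncard = c) :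
    ∑ p ∈ P.toFinite.toFinset, {l | l ∈ L ∧ r p l}.ncard = L.ncard * c := by
  classical
  calc ∑ p ∈ P.toFinite.toFinset, {l | l ∈ L ∧ r p l}.ncard
      = ∑ p ∈ P.toFinite.toFinset, (hL.toFinset.bipartiteAbove r p).card :=
        Finset.sum_congr rfl fun p _ => Set.ncard_setOf_mem_and_eq_card_filter hL (r p)
    _ = ∑ l ∈ hL.toFinset, (P.toFinite.toFinset.bipartiteBelow r l).card :=
        Finset.sum_card_bipartiteAbove_eq_sum_card_bipartiteBelow r
    _ = ∑ _l ∈ hL.toFinset, c := Finset.sum_congr rfl fun l hl => by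
        rw [← hc l (hL.mem_toFinset.mp hl),
          Set.ncard_setOf_mem_and_eq_card_filter P.toFinite (r · l)]
        rfl
    _ = L.ncard * c := by rw [Finset.sum_const, smul_eq_mul, Set.ncard_eq_toFinset_card L hL]

theorem Finset.sum_natCast_eq_of_forall_eq_or_eq {γ : Type*} (u : Finset γ) {h : γ → ℕ}
    {a b : ℕ} (hh : ∀ z ∈ u, h z = a ∨ h z = b) :
    ∑ z ∈ u, (h z : ℤ) = u.card * a + (u.filter (h · = b)).card * ((b : ℤ) - a) := by
  classical
  have hcard := Finset.card_filter_add_card_filter_not (s := u) (h · = b)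
  have hsum_b : ∑ z ∈ u.filter (h · = b), (h z : ℤ) = ∑ _z ∈ u.filter (h · = b), (b : ℤ) :=
    Finset.sum_congr rfl fun z hz => by rw [(Finset.mem_filter.mp hz).2]
  have hsum_a : ∑ z ∈ u.filter (¬h · = b), (h z : ℤ) = ∑ _z ∈ u.filter (¬h · = b), (a : ℤ) :=
    Finset.sum_congr rfl fun z hz => by
      rw [(hh z (Finset.mem_filter.mp hz).1).resolve_right (Finset.mem_filter.mp hz).2]
  rw [← Finset.sum_filter_add_sum_filter_not u (h · = b), hsum_b, hsum_a, ← hcard]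
  simp only [Finset.sum_const, nsmul_eq_mul]
  push_cast; ring

theorem Finset.card_filter_eq_of_sum_eq {ι κ : Type*} {s : Finset ι} {t : Finset κ}
    {f : ι → ℕ} {g : κ → ℕ} {a b : ℕ} (hf : ∀ x ∈ s, f x = a ∨ f x = b)
    (hg : ∀ y ∈ t, g y = a ∨ g y = b) (hcard : s.card = t.card)
    (hsum : ∑ x ∈ s, f x = ∑ y ∈ t, g y) :
    (s.filter (f · = b)).card = (t.filter (g · = b)).card := by
  by_cases hab : a = b
  · subst hab
    rwa [Finset.filter_true_of_mem fun x hx => (hf x hx).elim id id,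
      Finset.filter_true_of_mem fun y hy => (hg y hy).elim id id]
  have hsumℤ : ∑ x ∈ s, (f x : ℤ) = ∑ y ∈ t, (g y : ℤ) := by exact_mod_cast hsum
  rw [s.sum_natCast_eq_of_forall_eq_or_eq hf, t.sum_natCast_eq_of_forall_eq_or_eq hg,
    hcard] at hsumℤ
  have hba : (b : ℤ) - a ≠ 0 := sub_ne_zero.mpr (by exact_mod_cast Ne.symm hab)
  exact_mod_cast mul_right_cancel₀ hba (add_left_cancel hsumℤ)

end DoubleCounting

section Polarity

variable (K V : Type*) [Field K] [AddCommGroup V] [Module K V] [FiniteDimensional K V]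

noncomputable def Subspace.polarity : Submodule K V ≃o (Submodule K V)ᵒᵈ :=
  Subspace.orderIsoFiniteDimensional.trans
    (Submodule.orderIsoMapComap (finBasis K V).toDualEquiv.symm).dual

variable {K V}

theorem Subspace.finrank_polarity_add_finrank (W : Submodule K V) :
    finrank K (OrderDual.ofDual (Subspace.polarity K V W) : Submodule K V) + finrank K W =
      finrank K V := by
  change finrank K (W.dualAnnihilator.map
    ((finBasis K V).toDualEquiv.symm : Dual K V →ₗ[K] V)) + _ = _
  rw [LinearEquiv.finrank_map_eq, add_comm, Subspace.finrank_add_finrank_dualAnnihilator_eq]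

theorem Subspace.ncard_finrank_eq_ge_eq_ncard_finrank_eq_le_polarity {a b : ℕ}
    (hab : a + b = finrank K V) (l : Submodule K V) :
    {U : Submodule K V | finrank K U = a ∧ l ≤ U}.ncard =
      {U : Submodule K V | finrank K U = b ∧
        U ≤ OrderDual.ofDual (Subspace.polarity K V l)}.ncard := by
  refine Set.ncard_congr (fun U _ => OrderDual.ofDual (Subspace.polarity K V U)) ?_ ?_ ?_
  · rintro U ⟨hU, hlU⟩
    refine ⟨?_, (Subspace.polarity K V).monotone hlU⟩
    have := Subspace.finrank_polarity_add_finrank U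
    omega
  · intro U U' _ _ h
    exact (Subspace.polarity K V).injective h
  · rintro U ⟨hU, hUl⟩
    set U' := (Subspace.polarity K V).symm (OrderDual.toDual U)
    have hU' : OrderDual.ofDual (Subspace.polarity K V U') = U := by simp [U']
    refine ⟨U', ⟨?_, ?_⟩, hU'⟩
    · have := Subspace.finrank_polarity_add_finrank U'
      rw [hU'] at this
      omega
    · rw [← (Subspace.polarity K V).le_iff_le]
      exact hU' ▸ hUl

end Polarity

theorem ncard_finrank_one_le_of_finrank_two {K V : Type*} [Field K] [Finite K] [AddCommGroup V]
    [Module K V] {W : Submodule K V} (hW : finrank K W = 2) :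
    {p : Submodule K V | finrank K p = 1 ∧ p ≤ W}.ncard = Nat.card K + 1 := by
  have himage : {p : Submodule K V | finrank K p = 1 ∧ p ≤ W} =
      Submodule.map W.subtype '' {H : Submodule K W | finrank K H = 1} := by
    ext p
    constructor
    · rintro ⟨hp, hpW⟩
      have hmap : Submodule.map W.subtype (Submodule.comap W.subtype p) = p := by
        rw [Submodule.map_comap_subtype, inf_eq_right.mpr hpW]
      refine ⟨Submodule.comap W.subtype p, ?_, hmap⟩
      rwa [Set.mem_ofPred_eq, ← Submodule.finrank_map_subtype_eq, hmap]
    · rintro ⟨H, hH, rfl⟩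
      exact ⟨(Submodule.finrank_map_subtype_eq W H).trans hH, Submodule.map_subtype_le W H⟩
  rw [himage,
    Set.ncard_image_of_injective _ (Submodule.map_injective_of_injective W.injective_subtype),
    ← Nat.card_coe_set_eq, ← Projectivization.card_of_finrank_two K W hW]
  exact Nat.card_congr (Projectivization.equivSubmodule K W).symm

section ProjectiveSpace

variable {K : Type} [Field K]

theorem ncard_pgPlane_eq_ncard_pgPoint : (pgPlane K).ncard = (pgPoint K).ncard := by
  simpa [pgPlane, pgPoint] using Subspace.ncard_finrank_eq_ge_eq_ncard_finrank_eq_le_polarity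
    (K := K) (V := Fin 4 → K) (a := 3) (b := 1) (by simp) ⊥

variable [Finite K]

theorem ncard_pgPoint_le_of_mem_pgLine {l : Submodule K (Fin 4 → K)} (hl : l ∈ pgLine K) :
    {p | p ∈ pgPoint K ∧ p ≤ l}.ncard = Nat.card K + 1 :=
  ncard_finrank_one_le_of_finrank_two hl

theorem ncard_pgPlane_ge_of_mem_pgLine {l : Submodule K (Fin 4 → K)} (hl : l ∈ pgLine K) :
    {π | π ∈ pgPlane K ∧ l ≤ π}.ncard = Nat.card K + 1 := by
  have hdual := Subspace.finrank_polarity_add_finrank l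
  rw [finrank_fin_fun, show finrank K l = 2 from hl] at hdual
  exact (Subspace.ncard_finrank_eq_ge_eq_ncard_finrank_eq_le_polarity
    (a := 3) (b := 1) (by simp) l).trans (ncard_finrank_one_le_of_finrank_two (by omega))

theorem sum_ncard_linesThru_eq_sum_ncard_linesIn {S : Set (Submodule K (Fin 4 → K))}
    (hS : S ⊆ pgLine K) :
    ∑ p ∈ (pgPoint K).toFinite.toFinset, (linesThru K S p).ncard =
      ∑ π ∈ (pgPlane K).toFinite.toFinset, (linesIn K S π).ncard :=
  (sum_ncard_incident_eq_ncard_mul (pgPoint K) S.toFinite (· ≤ ·)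
    fun _ hl => ncard_pgPoint_le_of_mem_pgLine (hS hl)).trans
  (sum_ncard_incident_eq_ncard_mul (pgPlane K) S.toFinite (fun π l => l ≤ π)
    fun _ hl => ncard_pgPlane_ge_of_mem_pgLine (hS hl)).symm

theorem exists_ncard_linesIn_eq_of_exists_ncard_linesThru_eq
    {S : Set (Submodule K (Fin 4 → K))} (hS : S ⊆ pgLine K) {a b : ℕ}
    (hpoint : ∀ p ∈ pgPoint K, (linesThru K S p).ncard = a ∨ (linesThru K S p).ncard = b)
    (hplane : ∀ π ∈ pgPlane K, (linesIn K S π).ncard = a ∨ (linesIn K S π).ncard = b)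
    (hb : ∃ p ∈ pgPoint K, (linesThru K S p).ncard = b) :
    ∃ π ∈ pgPlane K, (linesIn K S π).ncard = b := by
  classical
  obtain ⟨p, hp, hpb⟩ := hb
  have hcard := Finset.card_filter_eq_of_sum_eq
    (fun p hp => hpoint p ((Set.toFinite _).mem_toFinset.mp hp))
    (fun π hπ => hplane π ((Set.toFinite _).mem_toFinset.mp hπ))
    (by rw [← Set.ncard_eq_toFinset_card, ← Set.ncard_eq_toFinset_card,
      ncard_pgPlane_eq_ncard_pgPoint])
    (sum_ncard_linesThru_eq_sum_ncard_linesIn hS)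
  obtain ⟨π, hπ⟩ := Finset.card_pos.mp
    (hcard ▸ Finset.card_pos.mpr ⟨p, by simp [hp, hpb]⟩)
  exact ⟨π, by simpa using hπ⟩

end ProjectiveSpace

theorem stmt_1_general (K : Type) [Field K] [Fintype K] (q : ℕ)
    (S : Set (Submodule K (Fin 4 → K))) (hS : S ⊆ pgLine K)
    (h1 : P1 K S q) (h2 : P2 K S q) :
    (∃ π, IsTangent K S q π) ∧ (∃ π, IsSecant K S q π) := by
  obtain ⟨hpoint, hwhite, hblack⟩ := h1
  exact ⟨exists_ncard_linesIn_eq_of_exists_ncard_linesThru_eq hS hpoint h2 hblack,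
    exists_ncard_linesIn_eq_of_exists_ncard_linesThru_eq hS (fun p hp => (hpoint p hp).symm)
      (fun π hπ => (h2 π hπ).symm) hwhite⟩

/-- There exists at least one tangent plane and at least one
secant plane. -/
theorem stmt_1 (K : Type) [Field K] [Fintype K] (q : ℕ) (hq : Fintype.card K = q)
    (hq_odd : Odd q) (S : Set (Submodule K (Fin 4 → K))) (hS : S ⊆ pgLine K)
    (h1 : P1 K S q) (h2 : P2 K S q) (h2a : P2a K S q) (h2b : P2b K S q) :
    (∃ π, IsTangent K S q π) ∧ (∃ π, IsSecant K S q π) :=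
  stmt_1_general K q S hS h1 h2
end

section
/- Every line contained in a tangent plane contains at least one black point. -/
/-!
Double count the incidences of the lines `m ∈ S` with the points of `l` and with the planes
through `l`. For every line `m`, the points of `l ∩ m` and the planes through `l + m` are
equinumerous: `dim (l ∩ m) + dim (l + m) = 4`, and by duality a subspace of dimension `d` has as
many points as there are hyperplanes through a subspace of dimension `4 - d`. If `l` had no black
point, each of its `q + 1` points would lie on `q(q+1)/2` lines of `S`, while each of the `q + 1`
planes through `l` contains at least `q(q+1)/2` lines of `S` and the tangent plane `π` contains
`q² > q(q+1)/2` of them, so the second count would exceed the first.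
-/

open Submodule Set

open Module Finset

section Counting

variable {K V : Type*} [Field K] [AddCommGroup V] [Module K V]

def pointsOf (U : Submodule K V) : Set (Submodule K V) :=
  {p | finrank K p = 1 ∧ p ≤ U}

def hyperplanesThrough (W : Submodule K V) : Set (Submodule K V) :=
  {σ | finrank K σ + 1 = finrank K V ∧ W ≤ σ}

variable [Finite K]

theorem ncard_pointsOf (U : Submodule K V) :
    (pointsOf U).ncard = ∑ i ∈ range (finrank K U), Nat.card K ^ i := by
  have hpoints :
      pointsOf U = Submodule.map U.subtype '' {p : Submodule K U | finrank K p = 1} := by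
    ext p
    constructor
    · rintro ⟨hp, hpU⟩
      refine ⟨p.comap U.subtype, ?_, ?_⟩
      · rwa [Set.mem_ofPred_eq, (Submodule.comapSubtypeEquivOfLe hpU).finrank_eq]
      · rw [Submodule.map_comap_subtype, inf_eq_right.mpr hpU]
    · rintro ⟨p, hp, rfl⟩
      exact ⟨(Submodule.finrank_map_subtype_eq U p).trans hp, Submodule.map_subtype_le U p⟩
  rw [hpoints, Set.ncard_image_of_injective _
    (Submodule.map_injective_of_injective U.injective_subtype), ← Nat.card_coe_set_eq,
    ← Projectivization.card_of_finrank K U rfl]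
  exact Nat.card_congr (Projectivization.equivSubmodule K U).symm

variable [FiniteDimensional K V]

theorem ncard_hyperplanesThrough (W : Submodule K V) :
    (hyperplanesThrough W).ncard = ∑ i ∈ range (finrank K V - finrank K W), Nat.card K ^ i := by
  have hdual :
      hyperplanesThrough W = Submodule.dualAnnihilator ⁻¹' pointsOf W.dualAnnihilator := by
    ext σ
    have := Subspace.finrank_add_finrank_dualAnnihilator_eq σ
    simp only [hyperplanesThrough, pointsOf, Set.mem_ofPred_eq, Set.mem_preimage,
      Subspace.dualAnnihilator_le_dualAnnihilator_iff]
    constructor <;> rintro ⟨h, hle⟩ <;> exact ⟨by omega, hle⟩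
  have hsurj : ∀ Φ : Submodule K (Dual K V), Φ ∈ Set.range Submodule.dualAnnihilator :=
    fun Φ => ⟨Φ.dualCoannihilator, Subspace.dualCoannihilator_dualAnnihilator_eq⟩
  rw [hdual, Set.ncard_preimage_of_injective_subset_range
    (fun _ _ => Subspace.dualAnnihilator_inj.mp) (fun Φ _ => hsurj Φ), ncard_pointsOf]
  have := Subspace.finrank_add_finrank_dualAnnihilator_eq W
  congr 2
  omega

theorem ncard_pointsOf_inf_eq_ncard_hyperplanesThrough_sup {l m : Submodule K V}
    (h : finrank K l + finrank K m = finrank K V) :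
    (pointsOf (l ⊓ m)).ncard = (hyperplanesThrough (l ⊔ m)).ncard := by
  rw [ncard_pointsOf, ncard_hyperplanesThrough]
  have := Submodule.finrank_sup_add_finrank_inf_eq l m
  congr 2
  omega

theorem sum_pointsOf_ncard_eq_sum_hyperplanesThrough_ncard [Finite V] {l : Submodule K V}
    {S : Set (Submodule K V)} (hS : ∀ m ∈ S, finrank K l + finrank K m = finrank K V) :
    ∑ p ∈ (pointsOf l).toFinite.toFinset, {m ∈ S | p ≤ m}.ncard
      = ∑ σ ∈ (hyperplanesThrough l).toFinite.toFinset, {m ∈ S | m ≤ σ}.ncard := by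
  classical
  set P := (pointsOf l).toFinite.toFinset
  set Q := (hyperplanesThrough l).toFinite.toFinset
  set T := S.toFinite.toFinset
  have hT (r : Submodule K V → Prop) [DecidablePred r] :
      {m ∈ S | r m}.ncard = #{m ∈ T | r m} := by
    rw [← Set.ncard_coe_finset]; congr; ext; simp [T]
  have hP (m : Submodule K V) : #{p ∈ P | p ≤ m} = (pointsOf (l ⊓ m)).ncard := by
    rw [← Set.ncard_coe_finset]; congr; ext; simp [P, pointsOf, and_assoc]
  have hQ (m : Submodule K V) : #{σ ∈ Q | m ≤ σ} = (hyperplanesThrough (l ⊔ m)).ncard := by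
    rw [← Set.ncard_coe_finset]; congr; ext; simp [Q, hyperplanesThrough, and_assoc]
  calc ∑ p ∈ P, {m ∈ S | p ≤ m}.ncard
      = ∑ m ∈ T, #{p ∈ P | p ≤ m} := by
        simp only [hT]; exact sum_card_bipartiteAbove_eq_sum_card_bipartiteBelow _
    _ = ∑ m ∈ T, #{σ ∈ Q | m ≤ σ} := by
        refine sum_congr rfl fun m hm => ?_
        have hm : m ∈ S := by simpa [T] using hm
        rw [hP, hQ, ncard_pointsOf_inf_eq_ncard_hyperplanesThrough_sup (hS m hm)]
    _ = ∑ σ ∈ Q, {m ∈ S | m ≤ σ}.ncard := by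
        simp only [hT]; exact (sum_card_bipartiteAbove_eq_sum_card_bipartiteBelow _).symm

end Counting

theorem mul_succ_div_two_lt_sq {q : ℕ} (hq : 2 ≤ q) : q * (q + 1) / 2 < q ^ 2 := by
  rw [Nat.div_lt_iff_lt_mul two_pos]
  nlinarith

theorem stmt_2_general (K : Type) [Field K] [Fintype K] (q : ℕ) (hq : Fintype.card K = q)
    (S : Set (Submodule K (Fin 4 → K))) (hS : S ⊆ pgLine K)
    (h1 : P1 K S q) (h2 : P2 K S q) :
    ∀ π, IsTangent K S q π → ∀ l ∈ pgLine K, l ≤ π →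
      ∃ p, IsBlack K S q p ∧ p ≤ l := by
  intro π hπ l hl hlπ
  by_contra! hnone
  have hdim : finrank K (Fin 4 → K) = 4 := finrank_fin_fun K
  set P := (pointsOf l).toFinite.toFinset
  set Q := (hyperplanesThrough l).toFinite.toFinset
  set s := q * (q + 1) / 2
  have hcount : ∑ p ∈ P, (linesThru K S p).ncard = ∑ σ ∈ Q, (linesIn K S σ).ncard :=
    sum_pointsOf_ncard_eq_sum_hyperplanesThrough_ncard fun m hm => by rw [hl, hS hm, hdim]
  have hPQ : #P = #Q := by
    have := ncard_pointsOf_inf_eq_ncard_hyperplanesThrough_sup (l := l) (m := l) (by rw [hl, hdim])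
    rwa [inf_idem, sup_idem, Set.ncard_eq_toFinset_card (pointsOf l),
      Set.ncard_eq_toFinset_card (hyperplanesThrough l)] at this
  have hP : ∀ p ∈ P, (linesThru K S p).ncard = s := fun p hp => by
    obtain ⟨hp, hpl⟩ : p ∈ pointsOf l := by simpa [P] using hp
    exact (h1.1 p hp).resolve_right fun hb => hnone p ⟨hp, hb⟩ hpl
  have hs_lt : s < q ^ 2 := mul_succ_div_two_lt_sq (hq ▸ Fintype.one_lt_card)
  have hQ : ∀ σ ∈ Q, s ≤ (linesIn K S σ).ncard := fun σ hσ => by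
    obtain ⟨hσ, -⟩ : σ ∈ hyperplanesThrough l := by simpa [Q] using hσ
    rcases h2 σ (show finrank K σ = 3 by omega) with h | h <;> omega
  have hπQ : π ∈ Q := by simpa [Q, hyperplanesThrough, hdim, hπ.1.out] using hlπ
  have hlt : ∑ _σ ∈ Q, s < ∑ σ ∈ Q, (linesIn K S σ).ncard :=
    sum_lt_sum hQ ⟨π, hπQ, hπ.2 ▸ hs_lt⟩
  have heq : ∑ σ ∈ Q, (linesIn K S σ).ncard = ∑ _σ ∈ Q, s := by
    rw [← hcount, sum_congr rfl hP, sum_const, sum_const, hPQ]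
  omega

/-- Every line contained in a tangent plane contains at least one
black point. -/
theorem stmt_2 (K : Type) [Field K] [Fintype K] (q : ℕ) (hq : Fintype.card K = q)
    (hq_odd : Odd q) (S : Set (Submodule K (Fin 4 → K))) (hS : S ⊆ pgLine K)
    (h1 : P1 K S q) (h2 : P2 K S q) (h2a : P2a K S q) (h2b : P2b K S q) :
    ∀ π, IsTangent K S q π → ∀ l ∈ pgLine K, l ≤ π →
      ∃ p, IsBlack K S q p ∧ p ≤ l :=
  stmt_2_general K q hq S hS h1 h2
end

section
/- Every black point of PG(3,q) is contained in at least one tangent plane. -/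
/-!
Double counting the pairs (line `l ∈ S`, plane `π ∋ x` with `l ⊆ π`) gives, for every point `x`,
`∑_{π ∋ x} |S_π| = |S| + q |S_x|`: a line through `x` lies in the `q + 1` planes through it,
every other line in exactly one plane through `x`. Let `N` be the number of planes through a
point and `m = q(q+1)/2`. If a black point `p` lay on no tangent plane, all planes through `p`
would be secant, so `N m = |S| + q · q²`. At a point `w` on `m` lines of `S` every plane through
`w` has at least `m` lines of `S`, so `N m ≤ |S| + q m`. Hence `q² ≤ m`, which fails for `q ≥ 2`.
-/

open Submodule Set

open Module

section FiniteDimensional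

variable {K : Type} [Field K] {M : Type} [AddCommGroup M] [Module K M]

lemma Submodule.finrank_comap_mkQ [FiniteDimensional K M] (l : Submodule K M)
    (U : Submodule K (M ⧸ l)) :
    finrank K (U.comap l.mkQ) = finrank K U + finrank K l := by
  have hl : l ≤ U.comap l.mkQ := (l.ker_mkQ).ge.trans (LinearMap.ker_le_comap _)
  have h := LinearMap.finrank_range_add_finrank_ker (l.mkQ.comp (U.comap l.mkQ).subtype)
  rw [LinearMap.range_comp, Submodule.range_subtype,
    Submodule.map_comap_eq_of_surjective l.mkQ_surjective, LinearMap.ker_comp,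
    Submodule.ker_mkQ, (Submodule.comapSubtypeEquivOfLe hl).finrank_eq] at h
  exact h.symm

lemma ncard_setOf_le_finrank_eq_ncard_quotient [FiniteDimensional K M] (l : Submodule K M)
    (k : ℕ) :
    {W : Submodule K M | l ≤ W ∧ finrank K W = finrank K l + k}.ncard
      = {U : Submodule K (M ⧸ l) | finrank K U = k}.ncard := by
  rw [← Set.ncard_image_of_injective _ (Submodule.comap_injective_of_surjective l.mkQ_surjective)]
  congr 1
  ext W
  constructor
  · rintro ⟨hlW, hW⟩
    have hW' : (W.map l.mkQ).comap l.mkQ = W := by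
      rw [Submodule.comap_map_eq, Submodule.ker_mkQ, sup_eq_left.2 hlW]
    refine ⟨W.map l.mkQ, ?_, hW'⟩
    have := Submodule.finrank_comap_mkQ l (W.map l.mkQ)
    rw [hW'] at this
    simp only [Set.mem_ofPred_eq]
    omega
  · rintro ⟨U, hU, rfl⟩
    refine ⟨(l.ker_mkQ).ge.trans (LinearMap.ker_le_comap _), ?_⟩
    rw [Submodule.finrank_comap_mkQ, hU, add_comm]

lemma ncard_setOf_finrank_eq_congr {M₂ : Type} [AddCommGroup M₂] [Module K M₂]
    (e : M ≃ₗ[K] M₂) (k : ℕ) :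
    {U : Submodule K M | finrank K U = k}.ncard
      = {U : Submodule K M₂ | finrank K U = k}.ncard := by
  rw [← Nat.card_coe_set_eq, ← Nat.card_coe_set_eq]
  exact Nat.card_congr <| (Submodule.orderIsoMapComap e).toEquiv.subtypeEquiv fun U ↦ by
    simp [Submodule.orderIsoMapComap_apply, e.finrank_map_eq]

lemma ncard_setOf_finrank_eq_one_of_finrank_eq_two [Finite K] (h : finrank K M = 2) :
    {W : Submodule K M | finrank K W = 1}.ncard = Nat.card K + 1 := by
  rw [← Nat.card_coe_set_eq, ← Projectivization.card_of_finrank_two K M h]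
  exact Nat.card_congr (Projectivization.equivSubmodule K M).symm

noncomputable instance [Finite M] : Fintype (Submodule K M) :=
  haveI : Finite (Submodule K M) := Finite.of_injective _ SetLike.coe_injective
  Fintype.ofFinite _

end FiniteDimensional

section ProjectiveSpace

variable {K : Type} [Field K]

lemma ncard_planes_through_line [Fintype K] {l : Submodule K (Fin 4 → K)} (hl : l ∈ pgLine K) :
    {π | π ∈ pgPlane K ∧ l ≤ π}.ncard = Fintype.card K + 1 := by
  have hl2 : finrank K l = 2 := hl
  have hquot : finrank K ((Fin 4 → K) ⧸ l) = 2 := by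
    have := l.finrank_quotient_add_finrank
    rw [finrank_fin_fun] at this
    omega
  have hset : {π | π ∈ pgPlane K ∧ l ≤ π} = {W | l ≤ W ∧ finrank K W = finrank K l + 1} := by
    ext π
    simp only [Set.mem_ofPred_eq, pgPlane, hl2]
    tauto
  rw [hset, ncard_setOf_le_finrank_eq_ncard_quotient,
    ncard_setOf_finrank_eq_one_of_finrank_eq_two hquot, Nat.card_eq_fintype_card]

lemma ncard_planes_through_point_eq {x w : Submodule K (Fin 4 → K)} (hx : x ∈ pgPoint K)
    (hw : w ∈ pgPoint K) :
    {π | π ∈ pgPlane K ∧ x ≤ π}.ncard = {π | π ∈ pgPlane K ∧ w ≤ π}.ncard := by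
  have hset : ∀ y ∈ pgPoint K,
      {π | π ∈ pgPlane K ∧ y ≤ π} = {W | y ≤ W ∧ finrank K W = finrank K y + 2} := by
    intro y (hy : finrank K y = 1)
    ext π
    simp only [Set.mem_ofPred_eq, pgPlane, hy]
    tauto
  have hquot : ∀ y ∈ pgPoint K, finrank K ((Fin 4 → K) ⧸ y) = 3 := by
    intro y (hy : finrank K y = 1)
    have := y.finrank_quotient_add_finrank
    rw [finrank_fin_fun] at this
    omega
  obtain ⟨e⟩ := FiniteDimensional.nonempty_linearEquiv_of_finrank_eq
    ((hquot x hx).trans (hquot w hw).symm)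
  rw [hset x hx, hset w hw, ncard_setOf_le_finrank_eq_ncard_quotient,
    ncard_setOf_le_finrank_eq_ncard_quotient]
  exact ncard_setOf_finrank_eq_congr e 2

lemma planes_through_point_and_line_eq_singleton {x l : Submodule K (Fin 4 → K)}
    (hx : x ∈ pgPoint K) (hl : l ∈ pgLine K) (hxl : ¬x ≤ l) :
    {π | π ∈ pgPlane K ∧ x ≤ π ∧ l ≤ π} = {x ⊔ l} := by
  have hdisj : x ⊓ l = ⊥ :=
    disjoint_iff.1 ((Submodule.isAtom_iff_finrank_eq_one.2 hx).not_le_iff_disjoint.1 hxl)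
  have hsup : finrank K ↥(x ⊔ l) = 3 := by
    have := Submodule.finrank_sup_add_finrank_inf_eq x l
    rw [hdisj, finrank_bot, show finrank K x = 1 from hx, show finrank K l = 2 from hl] at this
    omega
  ext π
  simp only [Set.mem_ofPred_eq, Set.mem_singleton_iff]
  constructor
  · rintro ⟨hπ, hxπ, hlπ⟩
    exact (Submodule.eq_of_le_of_finrank_eq (sup_le hxπ hlπ) (hsup.trans hπ.symm)).symm
  · rintro rfl
    exact ⟨hsup, le_sup_left, le_sup_right⟩

open scoped Classical in
lemma card_filter_planes_through_point_le [Fintype K] {x l : Submodule K (Fin 4 → K)}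
    (hx : x ∈ pgPoint K) (hl : l ∈ pgLine K) :
    ({π | π ∈ pgPlane K ∧ x ≤ π}.toFinset.filter (l ≤ ·)).card
      = if x ≤ l then Fintype.card K + 1 else 1 := by
  split_ifs with hxl
  · rw [← ncard_planes_through_line hl, ← Set.ncard_coe_finset]
    congr 1
    ext π
    simp only [Finset.coe_filter, Set.mem_toFinset, Set.mem_ofPred_eq]
    exact ⟨fun h ↦ ⟨h.1.1, h.2⟩, fun h ↦ ⟨⟨h.1, hxl.trans h.2⟩, h.2⟩⟩
  · rw [← Set.ncard_singleton (x ⊔ l), ← planes_through_point_and_line_eq_singleton hx hl hxl,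
      ← Set.ncard_coe_finset]
    congr 1
    ext π
    simp only [Finset.coe_filter, Set.mem_toFinset, Set.mem_ofPred_eq, and_assoc]

open scoped Classical in
lemma sum_ncard_linesIn_planes_through_point [Fintype K] {S : Set (Submodule K (Fin 4 → K))}
    (hS : S ⊆ pgLine K) {x : Submodule K (Fin 4 → K)} (hx : x ∈ pgPoint K) :
    ∑ π ∈ {π | π ∈ pgPlane K ∧ x ≤ π}.toFinset, (linesIn K S π).ncard
      = S.ncard + Fintype.card K * (linesThru K S x).ncard := by
  set P := {π | π ∈ pgPlane K ∧ x ≤ π}.toFinset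
  have hlinesIn : ∀ π, linesIn K S π = ↑(S.toFinset.filter (· ≤ π)) := fun π ↦ by
    ext l; simp [linesIn]
  have hlinesThru : linesThru K S x = ↑(S.toFinset.filter (x ≤ ·)) := by
    ext l; simp [linesThru]
  calc ∑ π ∈ P, (linesIn K S π).ncard
      = ∑ l ∈ S.toFinset, (P.filter (l ≤ ·)).card := by
        simp only [hlinesIn, Set.ncard_coe_finset, Finset.card_filter]
        exact Finset.sum_comm
    _ = ∑ l ∈ S.toFinset, (1 + Fintype.card K * if x ≤ l then 1 else 0) := by
        refine Finset.sum_congr rfl fun l hl ↦ ?_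
        rw [card_filter_planes_through_point_le hx (hS (Set.mem_toFinset.1 hl))]
        split_ifs <;> ring
    _ = S.ncard + Fintype.card K * (linesThru K S x).ncard := by
        rw [Finset.sum_add_distrib, ← Finset.mul_sum, Finset.sum_boole, hlinesThru,
          Set.ncard_coe_finset, Set.ncard_eq_toFinset_card']
        simp

end ProjectiveSpace

theorem stmt_3_general (K : Type) [Field K] [Fintype K] (q : ℕ) (hq : Fintype.card K = q)
    (S : Set (Submodule K (Fin 4 → K))) (hS : S ⊆ pgLine K)
    (h1 : P1 K S q) (h2 : P2 K S q) :
    ∀ p, IsBlack K S q p → ∃ π, IsTangent K S q π ∧ p ≤ π := by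
  classical
  rintro p ⟨hp, hp_black⟩
  by_contra! hno
  obtain ⟨-, ⟨w, hw, hw_white⟩, -⟩ := h1
  set m := q * (q + 1) / 2
  have hq2 : 2 ≤ q := hq ▸ Fintype.one_lt_card
  have hm : 2 * m = q * (q + 1) := Nat.mul_div_cancel' (Nat.even_mul_succ_self q).two_dvd
  have h_secant : ∀ π ∈ {π | π ∈ pgPlane K ∧ p ≤ π}.toFinset, (linesIn K S π).ncard = m := by
    intro π hπ
    obtain ⟨hπ, hpπ⟩ := Set.mem_toFinset.1 hπ
    exact (h2 π hπ).resolve_right fun h ↦ hno π ⟨hπ, h⟩ hpπ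
  have h_lt : m < q ^ 2 := by nlinarith
  have h_ge : ∀ π ∈ {π | π ∈ pgPlane K ∧ w ≤ π}.toFinset, m ≤ (linesIn K S π).ncard := by
    intro π hπ
    rcases h2 π (Set.mem_toFinset.1 hπ).1 with h | h
    · exact h.ge
    · exact h ▸ h_lt.le
  have hp_sum := sum_ncard_linesIn_planes_through_point hS hp
  have hw_sum := sum_ncard_linesIn_planes_through_point hS hw
  rw [Finset.sum_congr rfl h_secant, Finset.sum_const, smul_eq_mul, hq, hp_black] at hp_sum
  have hw_le := Finset.card_nsmul_le_sum _ _ m h_ge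
  rw [hw_sum, hq, hw_white, smul_eq_mul, ← Set.ncard_eq_toFinset_card',
    ← ncard_planes_through_point_eq hp hw] at hw_le
  rw [← Set.ncard_eq_toFinset_card'] at hp_sum
  have h_cube : q * q ^ 2 ≤ q * m := by linarith
  exact h_lt.not_ge (Nat.le_of_mul_le_mul_left h_cube (by omega))

/-- Every black point is contained in at least one tangent
plane. -/
theorem stmt_3 (K : Type) [Field K] [Fintype K] (q : ℕ) (hq : Fintype.card K = q)
    (hq_odd : Odd q) (S : Set (Submodule K (Fin 4 → K))) (hS : S ⊆ pgLine K)
    (h1 : P1 K S q) (h2 : P2 K S q) (h2a : P2a K S q) (h2b : P2b K S q) :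
    ∀ p, IsBlack K S q p → ∃ π, IsTangent K S q π ∧ p ≤ π :=
  stmt_3_general K q hq S hS h1 h2
end

section
/- Let π be a secant plane and let l be a line of π with l ∈ S_π. Then the triple (|α(l)|, |β(l)|, |γ(l)|) equals ((q-1)/2, (q-1)/2, 2) or (0, q, 1). -/
open Submodule Set

/-!
Two distinct lines of a plane meet in exactly one point and a line has `q + 1` points, so summing
the pencil sizes over the points of a line `l ∈ S_π` counts every line of `S_π` once and `l` a
further `q` times: the sum is `q(q+1)/2 + q`. With `q = 2k + 1` and `a, b, c` the numbers of
points of `l` whose pencil has `k`, `k + 1`, `q` lines, this reads `a + b + c = 2k + 2` and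
`ak + b(k + 1) + c(2k + 1) = (2k + 1)(k + 2)`, whence `b + c(k + 1) = 3k + 2`, so `c ∈ {1, 2}`
and the two solutions are `(0, q, 1)` and `(k, k, 2)`.
-/

open Module (finrank)
open scoped Finset

theorem Finset.sum_comp_eq_of_forall_eq_or_eq_or_eq {ι : Type*} {s : Finset ι} {f : ι → ℕ}
    {u v w : ℕ} (huv : u ≠ v) (huw : u ≠ w) (hvw : v ≠ w)
    (hf : ∀ i ∈ s, f i = u ∨ f i = v ∨ f i = w) (g : ℕ → ℕ) :
    ∑ i ∈ s, g (f i) =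
      #{i ∈ s | f i = u} * g u + #{i ∈ s | f i = v} * g v + #{i ∈ s | f i = w} * g w := by
  have hfiber : ∀ x, ∑ i ∈ s with f i = x, g (f i) = #{i ∈ s | f i = x} * g x := fun x ↦
    Finset.sum_const_nat fun i hi ↦ by rw [(Finset.mem_filter.mp hi).2]
  rw [← Finset.sum_fiberwise_of_maps_to (t := {u, v, w}) (by simpa using hf),
    Finset.sum_insert (by simp [huv, huw]), Finset.sum_insert (by simp [hvw]),
    Finset.sum_singleton, add_assoc]
  simp only [hfiber]

theorem eq_and_eq_and_eq_or_of_add_eq_of_weighted_sum_eq {k a b c : ℕ} (hk : 1 ≤ k)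
    (hcard : a + b + c = 2 * k + 2)
    (hsum : a * k + b * (k + 1) + c * (2 * k + 1) = (2 * k + 1) * (k + 1) + (2 * k + 1)) :
    (a = k ∧ b = k ∧ c = 2) ∨ (a = 0 ∧ b = 2 * k + 1 ∧ c = 1) := by
  have hbc : b + c * (k + 1) = 3 * k + 2 := by nlinarith
  have hc : c ≤ 2 := by nlinarith
  interval_cases c <;> omega

section Incidence

variable (K) {V : Type*} [Field K] [AddCommGroup V] [Module K V]

def pointsOn (W : Submodule K V) : Set (Submodule K V) :=
  {p | finrank K p = 1 ∧ p ≤ W}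

variable {K}

theorem pointsOn_eq_singleton_of_finrank_eq_one {P : Submodule K V} (hP : finrank K P = 1) :
    pointsOn K P = {P} := by
  have : FiniteDimensional K P := Module.finite_of_finrank_eq_succ hP
  ext p
  refine ⟨fun ⟨hp, hle⟩ ↦ Submodule.eq_of_le_of_finrank_le hle (hP ▸ hp.ge), ?_⟩
  rintro rfl
  exact ⟨hP, le_rfl⟩

theorem ncard_pointsOn_of_finrank_eq_two [Finite K] {l : Submodule K V}
    (hl : finrank K l = 2) :
    (pointsOn K l).ncard = Nat.card K + 1 := by
  have himage : pointsOn K l =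
      Submodule.map l.subtype '' {H : Submodule K l | finrank K H = 1} := by
    ext p
    constructor
    · rintro ⟨hp, hpl⟩
      have hmap : Submodule.map l.subtype (Submodule.comap l.subtype p) = p := by
        rw [Submodule.map_comap_subtype, inf_of_le_right hpl]
      refine ⟨Submodule.comap l.subtype p, ?_, hmap⟩
      rwa [Set.mem_ofPred_eq, ← Submodule.finrank_map_subtype_eq, hmap]
    · rintro ⟨H, hH, rfl⟩
      exact ⟨(Submodule.finrank_map_subtype_eq l H).trans hH, Submodule.map_subtype_le l H⟩
  rw [himage, Set.ncard_image_of_injective _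
      (Submodule.map_injective_of_injective l.injective_subtype),
    ← Nat.card_coe_set_eq, ← Projectivization.card_of_finrank_two K l hl]
  exact Nat.card_congr (Projectivization.equivSubmodule K l).symm

theorem finrank_inf_eq_one_of_le_of_finrank_eq_three {π l m : Submodule K V}
    (hπ : finrank K π = 3) (hl : finrank K l = 2) (hm : finrank K m = 2) (hlm : l ≠ m)
    (hlπ : l ≤ π) (hmπ : m ≤ π) : finrank K ↥(l ⊓ m) = 1 := by
  have : FiniteDimensional K π := Module.finite_of_finrank_eq_succ hπ
  have : FiniteDimensional K l := Module.finite_of_finrank_eq_succ hl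
  have : FiniteDimensional K m := Module.finite_of_finrank_eq_succ hm
  have hlt : l < l ⊔ m := left_lt_sup.mpr fun hml ↦
    hlm (Submodule.eq_of_le_of_finrank_le hml (by omega)).symm
  have := Submodule.finrank_lt_finrank_of_lt hlt
  have := Submodule.finrank_mono (sup_le hlπ hmπ)
  have := Submodule.finrank_sup_add_finrank_inf_eq l m
  omega

open Classical in
theorem sum_card_filter_le_eq_card_add [Finite K] {π l : Submodule K V}
    {P T : Finset (Submodule K V)} (hπ : finrank K π = 3)
    (hT : ∀ m ∈ T, finrank K m = 2 ∧ m ≤ π) (hl : l ∈ T)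
    (hP : (P : Set (Submodule K V)) = pointsOn K l) :
    ∑ p ∈ P, #{m ∈ T | p ≤ m} = #T + Nat.card K := by
  have hinner : ∀ m ∈ T, #{p ∈ P | p ≤ m} = if m = l then Nat.card K + 1 else 1 := by
    intro m hm
    have hcoe : (({p ∈ P | p ≤ m} : Finset _) : Set (Submodule K V)) =
        pointsOn K (l ⊓ m) := by
      ext p
      simp only [Finset.coe_filter, ← Finset.mem_coe, hP, pointsOn, Set.mem_ofPred_eq, le_inf_iff,
        and_assoc]
    rw [← Set.ncard_coe_finset, hcoe]
    split_ifs with hml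
    · rw [hml, inf_idem, ncard_pointsOn_of_finrank_eq_two (hT l hl).1]
    · rw [pointsOn_eq_singleton_of_finrank_eq_one (finrank_inf_eq_one_of_le_of_finrank_eq_three hπ
        (hT l hl).1 (hT m hm).1 (Ne.symm hml) (hT l hl).2 (hT m hm).2), Set.ncard_singleton]
  simp_rw [Finset.card_filter]
  rw [Finset.sum_comm]
  simp_rw [← Finset.card_filter]
  rw [Finset.sum_congr rfl hinner, ← Finset.add_sum_erase T _ hl, if_pos rfl,
    Finset.sum_congr rfl fun m hm ↦ if_neg (Finset.ne_of_mem_erase hm), Finset.sum_const,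
    smul_eq_mul, mul_one, Finset.card_erase_of_mem hl]
  have := Finset.card_pos.mpr ⟨l, hl⟩
  omega

end Incidence

section PG3

variable {K : Type} [Field K] {S : Set (Submodule K (Fin 4 → K))}
  {π l : Submodule K (Fin 4 → K)}

open Classical in
theorem ncard_pencilS_eq_card_filter [Fintype K] (p : Submodule K (Fin 4 → K)) :
    (pencilS K S p π).ncard = #{m ∈ (Set.toFinite (linesIn K S π)).toFinset | p ≤ m} := by
  rw [← Set.ncard_coe_finset, Finset.coe_filter]
  congr 1
  ext m
  simp only [Set.Finite.mem_toFinset, linesIn, pencilS, Set.mem_ofPred_eq]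
  tauto

theorem sum_ncard_pencilS_eq [Fintype K] {P : Finset (Submodule K (Fin 4 → K))}
    (hP : (P : Set (Submodule K (Fin 4 → K))) = pointsOn K l) (hS : S ⊆ pgLine K)
    (hπ : π ∈ pgPlane K) (hlS : l ∈ S) (hlπ : l ≤ π) :
    ∑ p ∈ P, (pencilS K S p π).ncard =
      (linesIn K S π).ncard + Fintype.card K := by
  classical
  have hT : ∀ m ∈ (Set.toFinite (linesIn K S π)).toFinset, finrank K m = 2 ∧ m ≤ π :=
    fun m hm ↦ have ⟨hmS, hmπ⟩ := (Set.Finite.mem_toFinset _).mp hm; ⟨hS hmS, hmπ⟩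
  simp only [ncard_pencilS_eq_card_filter]
  rw [sum_card_filter_le_eq_card_add hπ hT ((Set.Finite.mem_toFinset _).mpr ⟨hlS, hlπ⟩) hP,
    Set.ncard_eq_toFinset_card _ (Set.toFinite _),
    Nat.card_eq_fintype_card]

open Classical in
theorem ncard_pencilS_levelSet_inter_pointsOn {P : Finset (Submodule K (Fin 4 → K))}
    (hP : (P : Set (Submodule K (Fin 4 → K))) = pointsOn K l) (hlπ : l ≤ π) (n : ℕ) :
    {p | (p ∈ pgPoint K ∧ p ≤ π ∧ (pencilS K S p π).ncard = n) ∧ p ≤ l}.ncard =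
      #{p ∈ P | (pencilS K S p π).ncard = n} := by
  rw [← Set.ncard_coe_finset, Finset.coe_filter]
  congr 1
  ext p
  simp only [← Finset.mem_coe, hP, pgPoint, pointsOn, Set.mem_ofPred_eq]
  exact ⟨fun ⟨⟨h1, _, h3⟩, h4⟩ ↦ ⟨⟨h1, h4⟩, h3⟩, fun ⟨⟨h1, h4⟩, h3⟩ ↦ ⟨⟨h1, h4.trans hlπ, h3⟩, h4⟩⟩

end PG3

theorem stmt_6_general (K : Type) [Field K] [Fintype K] (q : ℕ) (hq : Fintype.card K = q)
    (hq_odd : Odd q) (S : Set (Submodule K (Fin 4 → K))) (hS : S ⊆ pgLine K)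
    (h2b : P2b K S q) :
    ∀ π, IsSecant K S q π → ∀ l ∈ S, l ≤ π →
      (({p | p ∈ alphaSet K S q π ∧ p ≤ l}.ncard = (q - 1) / 2 ∧
        {p | p ∈ betaSet K S q π ∧ p ≤ l}.ncard = (q - 1) / 2 ∧
        {p | p ∈ gammaSet K S q π ∧ p ≤ l}.ncard = 2) ∨
       ({p | p ∈ alphaSet K S q π ∧ p ≤ l}.ncard = 0 ∧
        {p | p ∈ betaSet K S q π ∧ p ≤ l}.ncard = q ∧
        {p | p ∈ gammaSet K S q π ∧ p ≤ l}.ncard = 1)) := by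
  classical
  rintro π ⟨hπ, hπS⟩ l hlS hlπ
  obtain ⟨k, rfl⟩ := hq_odd
  have hk : 1 ≤ k := by have := Fintype.one_lt_card (α := K); omega
  obtain ⟨P, hP⟩ := (Set.toFinite (pointsOn K l)).exists_finset_coe
  have hvals : ∀ p ∈ P, (pencilS K S p π).ncard = k ∨ (pencilS K S p π).ncard = k + 1 ∨
      (pencilS K S p π).ncard = 2 * k + 1 := fun p hp ↦ by
    have ⟨hp1, hpl⟩ : p ∈ pointsOn K l := hP ▸ Finset.mem_coe.mpr hp
    have := h2b π hπ hπS p hp1 (hpl.trans hlπ)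
    omega
  have hcount := Finset.sum_comp_eq_of_forall_eq_or_eq_or_eq (by omega) (by omega) (by omega)
    hvals (fun _ ↦ 1)
  rw [← Finset.card_eq_sum_ones, ← Set.ncard_coe_finset, hP,
    ncard_pointsOn_of_finrank_eq_two (hS hlS), Nat.card_eq_fintype_card, hq] at hcount
  have hweighted := Finset.sum_comp_eq_of_forall_eq_or_eq_or_eq (by omega) (by omega) (by omega)
    hvals id
  dsimp only [id] at hweighted
  rw [sum_ncard_pencilS_eq hP hS hπ hlS hlπ, hπS, hq,
    show (2 * k + 1) * (2 * k + 1 + 1) / 2 = (2 * k + 1) * (k + 1) from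
      Nat.div_eq_of_eq_mul_left two_pos (by ring)] at hweighted
  simp only [alphaSet, betaSet, gammaSet, Set.mem_ofPred_eq,
    ncard_pencilS_levelSet_inter_pointsOn hP hlπ]
  rw [show (2 * k + 1 - 1) / 2 = k by omega, show (2 * k + 1 + 1) / 2 = k + 1 by omega]
  exact eq_and_eq_and_eq_or_of_add_eq_of_weighted_sum_eq hk (by omega) hweighted.symm

/-- For a secant plane `π` and a line `l` of `π` with `l ∈ S_π`,
the triple `(|α(l)|, |β(l)|, |γ(l)|)` equals `((q-1)/2, (q-1)/2, 2)` or
`(0, q, 1)`. -/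
theorem stmt_6 (K : Type) [Field K] [Fintype K] (q : ℕ) (hq : Fintype.card K = q)
    (hq_odd : Odd q) (S : Set (Submodule K (Fin 4 → K))) (hS : S ⊆ pgLine K)
    (h1 : P1 K S q) (h2 : P2 K S q) (h2a : P2a K S q) (h2b : P2b K S q) :
    ∀ π, IsSecant K S q π → ∀ l ∈ S, l ≤ π →
      (({p | p ∈ alphaSet K S q π ∧ p ≤ l}.ncard = (q - 1) / 2 ∧
        {p | p ∈ betaSet K S q π ∧ p ≤ l}.ncard = (q - 1) / 2 ∧
        {p | p ∈ gammaSet K S q π ∧ p ≤ l}.ncard = 2) ∨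
       ({p | p ∈ alphaSet K S q π ∧ p ≤ l}.ncard = 0 ∧
        {p | p ∈ betaSet K S q π ∧ p ≤ l}.ncard = q ∧
        {p | p ∈ gammaSet K S q π ∧ p ≤ l}.ncard = 1)) :=
  stmt_6_general K q hq hq_odd S hS h2b
end
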